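/- Let R be an associative ring and let Q ∈ R satisfy Q·Q = 0. Define the derived bracket ⟦X,Y⟧ := (XQ + QX)Y − Y(XQ + QX) for X, Y ∈ R. Then the (left) Leibniz/Loday identity holds: for all X, Y, Z ∈ R, ⟦X, ⟦Y,Z⟧⟧ = ⟦⟦X,Y⟧, Z⟧ + ⟦Y, ⟦X,Z⟧⟧. -/
import Mathlib


/-- Loday/Leibniz identity for the derived bracket
`⟦X,Y⟧ := (X*Q + Q*X)*Y - Y*(X*Q + Q*X)` in an associative ring with `Q*Q = 0`. -/
theorem derived_bracket_loday {R : Type*} [Ring R] (Q : R) (hQ : Q * Q = 0) :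
    ∀ X Y Z : R,
      (letI db : R → R → R := fun a b => (a * Q + Q * a) * b - b * (a * Q + Q * a)
       db X (db Y Z) = db (db X Y) Z + db Y (db X Z)) := by
  intro X Y Z
  have h : ∀ a : R, Q * (Q * a) = 0 := fun a => by rw [← mul_assoc, hQ, zero_mul]
  simp only [mul_add, add_mul, mul_sub, sub_mul, mul_assoc, hQ, zero_mul, mul_zero, h]
  noncomm_ring
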